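/- Given a directed graph G and four distinct vertices x, y, w, z, there exist vertex-disjoint paths x⇝y and w⇝z in G if and only if the edge e = y→w is irredundant in the net (G', x, z), where G' is G augmented (if necessary) with the edge e. -/

import Mathlib

/-- A directed multigraph: a type of vertices, a type of edges,
and source/target maps. -/
structure MultiDigraph (V E : Type) where
  src : E → V
  tgt : E → V

namespace MultiDigraph

variable {V E : Type}

/-- `G.IsWalk u p v` : the list of edges `p` forms a walk from `u` to `v`. -/
def IsWalk (G : MultiDigraph V E) : V → List E → V → Prop
  | u, [], v => u = v
  | u, e :: p, v => G.src e = u ∧ IsWalk G (G.tgt e) p v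

/-- The list of vertices visited by a walk starting at `u` with edges `p`. -/
def walkVerts (G : MultiDigraph V E) : V → List E → List V
  | u, [] => [u]
  | u, e :: p => u :: walkVerts G (G.tgt e) p

/-- A simple path: a walk repeating no vertex. -/
def IsSimplePath (G : MultiDigraph V E) (u : V) (p : List E) (v : V) : Prop :=
  G.IsWalk u p v ∧ (G.walkVerts u p).Nodup

/-- The set of simple `st`-paths using only edges from `F`. -/
def SP (G : MultiDigraph V E) (F : Set E) (s t : V) : Set (List E) :=
  {p | G.IsSimplePath s p t ∧ ∀ e ∈ p, e ∈ F}

/-- An edge is irredundant if it lies on some simple `st`-path. -/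
def EdgeIrredundant (G : MultiDigraph V E) (s t : V) (e : E) : Prop :=
  ∃ p, G.IsSimplePath s p t ∧ e ∈ p

/-- A vertex is irredundant if it lies on some simple `st`-path. -/
def VertexIrredundant (G : MultiDigraph V E) (s t : V) (x : V) : Prop :=
  ∃ p, G.IsSimplePath s p t ∧ x ∈ G.walkVerts s p

/-- A net is `st`-connected if every vertex lies on some `st`-path. -/
def STConnected (G : MultiDigraph V E) (s t : V) : Prop :=
  ∀ x : V, ∃ p, G.IsWalk s p t ∧ x ∈ G.walkVerts s p

end MultiDigraph

namespace MultiDigraph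

/-- `G` augmented with one extra edge from `y` to `w`. -/
def addEdge {V E : Type} (G : MultiDigraph V E) (y w : V) :
    MultiDigraph V (E ⊕ Unit) :=
  ⟨Sum.elim G.src fun _ => y, Sum.elim G.tgt fun _ => w⟩

end MultiDigraph

/-
Splitting a simple `x ⇝ z` path of `G + (y → w)` at the new edge gives a path `x ⇝ y` and a path
`w ⇝ z` with no common vertex; these avoid the new edge, since using it would put `w` on the first
or `y` on the second, so they are paths of `G`. Conversely two vertex-disjoint walks can first be
shortened to simple paths, and then joined through the new edge into a simple `x ⇝ z` path.
-/

namespace MultiDigraph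

variable {V E : Type} (G : MultiDigraph V E)

@[simp] lemma isWalk_nil {u v : V} : G.IsWalk u [] v ↔ u = v := Iff.rfl

@[simp] lemma isWalk_cons {u v : V} {e : E} {p : List E} :
    G.IsWalk u (e :: p) v ↔ G.src e = u ∧ G.IsWalk (G.tgt e) p v := Iff.rfl

@[simp] lemma walkVerts_nil (u : V) : G.walkVerts u [] = [u] := rfl

@[simp] lemma walkVerts_cons (u : V) (e : E) (p : List E) :
    G.walkVerts u (e :: p) = u :: G.walkVerts (G.tgt e) p := rfl

variable {G}

lemma start_mem_walkVerts (u : V) (p : List E) : u ∈ G.walkVerts u p := by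
  cases p <;> simp

lemma end_mem_walkVerts : ∀ {p : List E} {u v : V}, G.IsWalk u p v → v ∈ G.walkVerts u p
  | [], _, _, rfl => by simp
  | _ :: _, _, _, ⟨_, hp⟩ => List.mem_cons_of_mem _ (end_mem_walkVerts hp)

lemma src_mem_walkVerts : ∀ {p : List E} {u v : V} {e : E},
    G.IsWalk u p v → e ∈ p → G.src e ∈ G.walkVerts u p
  | e' :: p, u, v, e, ⟨he', hp⟩, he => by
    rcases List.mem_cons.1 he with rfl | he
    · simp [he']
    · exact List.mem_cons_of_mem _ (src_mem_walkVerts hp he)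

lemma tgt_mem_walkVerts : ∀ {p : List E} {u v : V} {e : E},
    G.IsWalk u p v → e ∈ p → G.tgt e ∈ G.walkVerts u p
  | e' :: p, u, v, e, ⟨_, hp⟩, he => by
    rcases List.mem_cons.1 he with rfl | he
    · exact List.mem_cons_of_mem _ (start_mem_walkVerts _ _)
    · exact List.mem_cons_of_mem _ (tgt_mem_walkVerts hp he)

lemma isWalk_append_cons : ∀ {p q : List E} {u v : V} {e : E},
    G.IsWalk u (p ++ e :: q) v ↔ G.IsWalk u p (G.src e) ∧ G.IsWalk (G.tgt e) q v
  | [], q, u, v, e => by simp [eq_comm]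
  | e' :: p, q, u, v, e => by simp [isWalk_append_cons, and_assoc]

lemma walkVerts_append_cons : ∀ {p : List E} {u : V} {e : E} (q : List E),
    G.IsWalk u p (G.src e) →
      G.walkVerts u (p ++ e :: q) = G.walkVerts u p ++ G.walkVerts (G.tgt e) q
  | [], _, _, q, rfl => rfl
  | _ :: _, _, _, q, ⟨_, hp⟩ => by simp [walkVerts_append_cons q hp]

lemma exists_isWalk_walkVerts_suffix : ∀ {p : List E} {u v a : V},
    G.IsWalk u p v → a ∈ G.walkVerts u p →
    ∃ q, G.IsWalk a q v ∧ G.walkVerts a q <:+ G.walkVerts u p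
  | [], u, v, a, hp, ha => by
    obtain rfl : a = u := List.mem_singleton.1 ha
    exact ⟨[], hp, List.suffix_refl _⟩
  | e :: p, u, v, a, ⟨he, hp⟩, ha => by
    rcases List.mem_cons.1 ha with rfl | ha
    · exact ⟨e :: p, ⟨he, hp⟩, List.suffix_refl _⟩
    · obtain ⟨q, hq, hsuf⟩ := exists_isWalk_walkVerts_suffix hp ha
      exact ⟨q, hq, hsuf.trans (List.suffix_cons _ _)⟩

lemma IsWalk.exists_isSimplePath : ∀ {p : List E} {u v : V}, G.IsWalk u p v →
    ∃ q, G.IsSimplePath u q v ∧ G.walkVerts u q ⊆ G.walkVerts u p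
  | [], _, _, hp => ⟨[], ⟨hp, List.nodup_singleton _⟩, List.Subset.refl _⟩
  | e :: p, u, v, ⟨he, hp⟩ => by
    obtain ⟨r, ⟨hr, hrn⟩, hrs⟩ := hp.exists_isSimplePath
    by_cases hu : u ∈ G.walkVerts (G.tgt e) r
    · obtain ⟨q, hq, hsuf⟩ := exists_isWalk_walkVerts_suffix hr hu
      exact ⟨q, ⟨hq, hrn.sublist hsuf.sublist⟩,
        List.Subset.trans hsuf.subset (List.Subset.trans hrs (List.subset_cons_self _ _))⟩
    · exact ⟨e :: r, ⟨⟨he, hr⟩, List.nodup_cons.2 ⟨hu, hrn⟩⟩, List.cons_subset_cons _ hrs⟩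

theorem edgeIrredundant_iff {s t : V} {e : E} :
    G.EdgeIrredundant s t e ↔ ∃ p q, G.IsWalk s p (G.src e) ∧ G.IsWalk (G.tgt e) q t ∧
      ∀ a ∈ G.walkVerts s p, a ∉ G.walkVerts (G.tgt e) q := by
  constructor
  · rintro ⟨r, ⟨hr, hrn⟩, he⟩
    obtain ⟨p, q, rfl⟩ := List.append_of_mem he
    obtain ⟨hp, hq⟩ := isWalk_append_cons.1 hr
    rw [walkVerts_append_cons q hp] at hrn
    exact ⟨p, q, hp, hq, fun a ha hb => List.disjoint_of_nodup_append hrn ha hb⟩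
  · rintro ⟨p, q, hp, hq, hdisj⟩
    obtain ⟨p', ⟨hp', hp'n⟩, hp's⟩ := hp.exists_isSimplePath
    obtain ⟨q', ⟨hq', hq'n⟩, hq's⟩ := hq.exists_isSimplePath
    refine ⟨p' ++ e :: q', ⟨isWalk_append_cons.2 ⟨hp', hq'⟩, ?_⟩, by simp⟩
    rw [walkVerts_append_cons q' hp']
    exact hp'n.append hq'n fun a ha hb => hdisj a (hp's ha) (hq's hb)

lemma notMem_of_disjoint_walks {s t : V} {e : E} {p q : List E}
    (hp : G.IsWalk s p (G.src e)) (hq : G.IsWalk (G.tgt e) q t)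
    (hdisj : ∀ a ∈ G.walkVerts s p, a ∉ G.walkVerts (G.tgt e) q) : e ∉ p ∧ e ∉ q :=
  ⟨fun he => hdisj _ (tgt_mem_walkVerts hp he) (start_mem_walkVerts _ _),
    fun he => hdisj _ (end_mem_walkVerts hp) (src_mem_walkVerts hq he)⟩

variable {y w : V}

@[simp] lemma addEdge_tgt_inr (u : Unit) : (G.addEdge y w).tgt (Sum.inr u) = w := rfl

@[simp] lemma isWalk_addEdge_map_inl : ∀ {p : List E} {u v : V},
    (G.addEdge y w).IsWalk u (p.map Sum.inl) v ↔ G.IsWalk u p v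
  | [], _, _ => Iff.rfl
  | _ :: _, _, _ => and_congr Iff.rfl isWalk_addEdge_map_inl

@[simp] lemma walkVerts_addEdge_map_inl : ∀ (p : List E) (u : V),
    (G.addEdge y w).walkVerts u (p.map Sum.inl) = G.walkVerts u p
  | [], _ => rfl
  | _ :: p, _ => congrArg _ (walkVerts_addEdge_map_inl p _)

end MultiDigraph

lemma List.exists_eq_map_inl {α : Type*} {p : List (α ⊕ Unit)} (h : Sum.inr () ∉ p) :
    ∃ p' : List α, p = p'.map Sum.inl := by
  induction p with
  | nil => exact ⟨[], rfl⟩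
  | cons a p ih =>
    obtain ⟨p', rfl⟩ := ih (fun hm => h (List.mem_cons_of_mem _ hm))
    rcases a with a | ⟨⟩
    · exact ⟨a :: p', rfl⟩
    · exact absurd List.mem_cons_self h

open MultiDigraph in
theorem stmt16_general {V E : Type} (G : MultiDigraph V E) (x y w z : V) :
    (∃ p q, G.IsWalk x p y ∧ G.IsWalk w q z ∧
      ∀ a ∈ G.walkVerts x p, a ∉ G.walkVerts w q) ↔
    (G.addEdge y w).EdgeIrredundant x z (Sum.inr ()) := by
  rw [edgeIrredundant_iff]
  constructor
  · rintro ⟨p, q, hp, hq, hdisj⟩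
    exact ⟨p.map Sum.inl, q.map Sum.inl, isWalk_addEdge_map_inl.2 hp,
      isWalk_addEdge_map_inl.2 hq, by simpa using hdisj⟩
  · rintro ⟨p, q, hp, hq, hdisj⟩
    obtain ⟨hep, heq⟩ := notMem_of_disjoint_walks hp hq hdisj
    obtain ⟨p, rfl⟩ := List.exists_eq_map_inl hep
    obtain ⟨q, rfl⟩ := List.exists_eq_map_inl heq
    exact ⟨p, q, isWalk_addEdge_map_inl.1 hp, isWalk_addEdge_map_inl.1 hq, by simpa using hdisj⟩

open MultiDigraph in
/-- There exist vertex-disjoint paths `x ⇝ y` and `w ⇝ z` in `G` iff the edge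
`y → w` is irredundant in the net `(G', x, z)`, where `G'` is `G` augmented
with that edge. -/
theorem stmt16 {V E : Type} (G : MultiDigraph V E) (x y w z : V)
    (hd : [x, y, w, z].Nodup) :
    (∃ p q, G.IsWalk x p y ∧ G.IsWalk w q z ∧
      ∀ a ∈ G.walkVerts x p, a ∉ G.walkVerts w q) ↔
    (G.addEdge y w).EdgeIrredundant x z (Sum.inr ()) :=
  stmt16_general G x y w z
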